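/- arXiv:2007.10989 — 3 statements merged into one kernel-verified Lean document; each statement's English description precedes it below -/
import Mathlib

section
/- Let (A, φ) be a *-probability space with free cumulants (κ_n), and let (A_i)_{i∈I} be unital *-subalgebras of A that are freely independent in the cumulant sense. Let a = a_1 ⋯ a_k and b = b_1 ⋯ b_ℓ, where a_u ∈ A_{i_u} with φ(a_u) = 0 and i_u ≠ i_{u+1} for all u, and b_v ∈ A_{j_v} with φ(b_v) = 0 and j_v ≠ j_{v+1} for all v. If it is not the case that k = ℓ and i_u = j_u for all 1 ≤ u ≤ k, then κ_2(a*, b) = 0. -/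
open scoped BigOperators ComplexOrder

/-- A partition of `{0, …, n-1}` is non-crossing if whenever `p < q < r < s`,
`p, r` lie in a block `B` and `q, s` lie in a block `C`, then `B = C`. -/
def IsNonCrossing {n : ℕ} (π : Finpartition (Finset.univ : Finset (Fin n))) : Prop :=
  ∀ (p q r s : Fin n), p < q → q < r → r < s →
    ∀ B ∈ π.parts, ∀ C ∈ π.parts, p ∈ B → r ∈ B → q ∈ C → s ∈ C → B = C

/-- The multiplicative extension `κ_π[a_1, …, a_n] = ∏_{V ∈ π} κ_{|V|}(a_{i_1}, …, a_{i_s})`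
of a family of multilinear functionals `κ_n : A^n → ℂ`, where each block
`V = {i_1 < ⋯ < i_s}` is listed in increasing order. -/
noncomputable def partCum {A : Type*} [Ring A] [Algebra ℂ A]
    (κ : ∀ n, MultilinearMap ℂ (fun _ : Fin n => A) ℂ)
    {n : ℕ} (π : Finpartition (Finset.univ : Finset (Fin n))) (a : Fin n → A) : ℂ :=
  ∏ V ∈ π.parts, κ (V.sort (· ≤ ·)).length (fun j => a ((V.sort (· ≤ ·)).get j))

open Classical in
/-- The moment–cumulant relation: `φ(a_1 ⋯ a_n) = Σ_{π ∈ NC(n)} κ_π[a_1, …, a_n]`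
for all `n ≥ 1`; it characterizes the free cumulants of `(A, φ)`. -/
def MomentCumulant {A : Type*} [Ring A] [Algebra ℂ A] (φ : A →ₗ[ℂ] ℂ)
    (κ : ∀ n, MultilinearMap ℂ (fun _ : Fin n => A) ℂ) : Prop :=
  ∀ (n : ℕ), 0 < n → ∀ a : Fin n → A,
    φ (List.ofFn a).prod =
      ∑ π ∈ Finset.univ.filter
          (fun π : Finpartition (Finset.univ : Finset (Fin n)) => IsNonCrossing π),
        partCum κ π a
/-- Free independence, in the cumulant sense, of a family of subsets `S i` of `A`:
all mixed free cumulants vanish. -/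
def FreeIndepCumulant {A : Type*} [Ring A] [Algebra ℂ A] {ι : Type*}
    (S : ι → Set A)
    (κ : ∀ n, MultilinearMap ℂ (fun _ : Fin n => A) ℂ) : Prop :=
  ∀ (n : ℕ), 2 ≤ n → ∀ (a : Fin n → A) (idx : Fin n → ι),
    (∀ j, a j ∈ S (idx j)) → (∃ j j' : Fin n, idx j ≠ idx j') →
    κ n a = 0

/-!
Expand `κ₂(a*, b) = φ(a* b) - φ(a*) φ(b)`. A product of centered letters in which neighbouring
letters come from different subalgebras has moment zero: a non-crossing partition of its letters
either has a singleton block, which contributes `κ₁ = φ` of a centered letter, or it has a block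
containing two neighbouring letters, which contributes a mixed cumulant. In
`a* b = a_k* ⋯ a_1* b_1 ⋯ b_l` the alternation can only fail at the junction `a_1* b_1`; there
one splits `a_1* b_1` into its centered part plus `φ(a_1* b_1) · 1` and recurses on the shorter
words, whose shapes still differ. Positivity of `φ` enters only through `φ(x*) = conj φ(x)`, which
makes the letters of `a*` centered.
-/

open Finset

theorem isNonCrossing_of_le_three {n : ℕ} (hn : n ≤ 3)
    (π : Finpartition (univ : Finset (Fin n))) : IsNonCrossing π := by
  intro p q r s hpq hqr hrs
  have := s.isLt
  omega

theorem IsNonCrossing.mem_Ioo_of_mem_Ioo {n : ℕ} {π : Finpartition (univ : Finset (Fin n))}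
    (hnc : IsNonCrossing π) {B C : Finset (Fin n)} (hB : B ∈ π.parts) (hC : C ∈ π.parts)
    (hBC : B ≠ C) {p q r s : Fin n} (hp : p ∈ B) (hr : r ∈ B) (hq : q ∈ C) (hs : s ∈ C)
    (hpqr : q ∈ Set.Ioo p r) : s ∈ Set.Ioo p r := by
  have hsp : s ≠ p := fun h => hBC (π.eq_of_mem_parts hB hC hp (h ▸ hs))
  have hsr : s ≠ r := fun h => hBC (π.eq_of_mem_parts hB hC hr (h ▸ hs))
  rcases lt_trichotomy s p with hsp' | rfl | hps
  · exact absurd (hnc s p q r hsp' hpqr.1 hpqr.2 C hC B hB hs hq hp hr) hBC.symm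
  · exact absurd rfl hsp
  rcases lt_trichotomy s r with hsr' | rfl | hrs
  · exact ⟨hps, hsr'⟩
  · exact absurd rfl hsr
  · exact absurd (hnc p q r s hpqr.1 hpqr.2 hrs B hB C hC hp hr hq hs) hBC

/-- Descent on the gap `r - p`: the block of `p + 1` is nested strictly inside `(p, r)`. -/
theorem IsNonCrossing.exists_adjacent_of_mem {n : ℕ}
    {π : Finpartition (univ : Finset (Fin n))} (hnc : IsNonCrossing π)
    (h2 : ∀ V ∈ π.parts, 2 ≤ #V) {B : Finset (Fin n)} (hB : B ∈ π.parts) {p r : Fin n}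
    (hp : p ∈ B) (hr : r ∈ B) (hpr : p < r) :
    ∃ V ∈ π.parts, ∃ p ∈ V, ∃ q ∈ V, (p : ℕ) + 1 = q := by
  induction hd : (r : ℕ) - p using Nat.strong_induction_on generalizing B p r with
  | _ d ih =>
  by_cases hadj : (p : ℕ) + 1 = r
  · exact ⟨B, hB, p, hp, r, hr, hadj⟩
  have hpr' : (p : ℕ) < r := hpr
  let q : Fin n := ⟨p + 1, by omega⟩
  obtain ⟨C, hC, hq⟩ := π.exists_mem (mem_univ q)
  by_cases hCB : C = B
  · exact ⟨B, hB, p, hp, q, hCB ▸ hq, rfl⟩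
  obtain ⟨s, hs, hsq⟩ := exists_mem_ne (h2 C hC) q
  have hqp : (q : ℕ) = p + 1 := rfl
  have hpqr : q ∈ Set.Ioo p r := ⟨Fin.lt_def.mpr (by omega), Fin.lt_def.mpr (by omega)⟩
  obtain ⟨hps, hsr⟩ := hnc.mem_Ioo_of_mem_Ioo hB hC (Ne.symm hCB) hp hr hq hs hpqr
  have hqs : q < s := lt_of_le_of_ne (Fin.lt_def.mp hps) (Ne.symm hsq)
  exact ih _ (by rw [← hd]; have := Fin.lt_def.mp hsr; omega) hC hq hs hqs rfl

theorem IsNonCrossing.exists_adjacent {n : ℕ} (hn : 0 < n)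
    {π : Finpartition (univ : Finset (Fin n))} (hnc : IsNonCrossing π)
    (h2 : ∀ V ∈ π.parts, 2 ≤ #V) :
    ∃ V ∈ π.parts, ∃ p ∈ V, ∃ q ∈ V, (p : ℕ) + 1 = q := by
  obtain ⟨B, hB, h0⟩ := π.exists_mem (mem_univ (⟨0, hn⟩ : Fin n))
  obtain ⟨r, hr, hr0⟩ := exists_mem_ne (h2 B hB) ⟨0, hn⟩
  exact hnc.exists_adjacent_of_mem h2 hB h0 hr
    (lt_of_le_of_ne (Fin.le_def.mpr r.val.zero_le) hr0.symm)

section Cumulants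

variable {A : Type*} [Ring A] [Algebra ℂ A] {φ : A →ₗ[ℂ] ℂ}
  {κ : ∀ n, MultilinearMap ℂ (fun _ : Fin n => A) ℂ}

theorem cumulant_sort_singleton {n : ℕ} (a : Fin n → A) (p : Fin n) :
    κ (({p} : Finset (Fin n)).sort (· ≤ ·)).length
        (fun j => a ((({p} : Finset (Fin n)).sort (· ≤ ·)).get j)) = κ 1 (fun _ => a p) := by
  rw [sort_singleton]
  congr 1
  funext j
  fin_cases j
  rfl

theorem partCum_bot {n : ℕ} (a : Fin n → A) : partCum κ ⊥ a = ∏ p, κ 1 (fun _ => a p) := by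
  simp only [partCum, Finpartition.parts_bot, prod_map]
  exact prod_congr rfl fun p _ => cumulant_sort_singleton a p

namespace MomentCumulant

theorem cumulant_one (hκ : MomentCumulant φ κ) (x : A) : κ 1 (fun _ => x) = φ x := by
  classical
  have h := hκ 1 one_pos (fun _ => x)
  rw [filter_true_of_mem fun π _ => isNonCrossing_of_le_three (by norm_num) π,
    (by decide : (univ : Finset (Finpartition (univ : Finset (Fin 1)))) = {⊥}),
    sum_singleton, partCum_bot] at h
  simpa using h.symm

theorem cumulant_two (hκ : MomentCumulant φ κ) (x y : A) :
    κ 2 ![x, y] = φ (x * y) - φ x * φ y := by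
  have htop : partCum κ ⊤ ![x, y] = κ 2 ![x, y] := by
    rw [partCum, (by decide : (⊤ : Finpartition (univ : Finset (Fin 2))).parts = {univ}),
      prod_singleton, Fin.sort_univ]
    show κ 2 _ = _
    congr 1
    funext j
    fin_cases j <;> rfl
  classical
  have h := hκ 2 two_pos ![x, y]
  rw [filter_true_of_mem fun π _ => isNonCrossing_of_le_three (by norm_num) π,
    (by decide : (univ : Finset (Finpartition (univ : Finset (Fin 2)))) = {⊤, ⊥}),
    sum_pair (by decide), htop, partCum_bot] at h
  simp only [List.ofFn_succ, List.ofFn_zero, List.prod_cons, List.prod_nil, mul_one,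
    Fin.prod_univ_two, cumulant_one hκ, Matrix.cons_val_zero, Matrix.cons_val_succ,
    Matrix.cons_val_one] at h
  linear_combination -h

end MomentCumulant

end Cumulants

theorem map_star_of_nonneg {A : Type*} [Ring A] [StarRing A] [Algebra ℂ A] [StarModule ℂ A]
    (φ : A →ₗ[ℂ] ℂ) (hpos : ∀ x : A, 0 ≤ φ (star x * x)) (y : A) :
    φ (star y) = starRingEnd ℂ (φ y) := by
  have him : ∀ x : A, (φ (star x * x)).im = 0 := fun x => (Complex.nonneg_iff.mp (hpos x)).2.symm
  have h0 : (φ 1).im = 0 := by simpa using him 1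
  have hy := him y
  -- polarization: `φ (x* x)` is real for `x = 1 + y` and for `x = 1 + i y`
  have h1 := him (1 + y)
  have h2 := him (1 + Complex.I • y)
  simp only [star_add, star_one, star_smul, add_mul, mul_add, one_mul, mul_one, smul_mul_assoc,
    mul_smul_comm, map_add, map_smul, Complex.star_def, Complex.conj_I, smul_eq_mul, neg_mul,
    Complex.add_im, Complex.neg_im, Complex.mul_im, Complex.I_re, Complex.I_im, zero_mul,
    Complex.neg_re, Complex.mul_re, zero_add, zero_sub, neg_neg] at h1 h2
  apply Complex.ext
  · rw [Complex.conj_re]; linarith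
  · rw [Complex.conj_im]; linarith

section AlternatingWords

variable {A : Type*} [Ring A] [Algebra ℂ A] {ι : Type*} {φ : A →ₗ[ℂ] ℂ}
  {κ : ∀ n, MultilinearMap ℂ (fun _ : Fin n => A) ℂ} {Alg : ι → Subalgebra ℂ A}

/-- `L` lists the letters of a word, each together with the index of the subalgebra it is
taken from. -/
def IsAlternatingCentered (φ : A →ₗ[ℂ] ℂ) (Alg : ι → Subalgebra ℂ A) (L : List (A × ι)) :
    Prop :=
  (∀ x ∈ L, x.1 ∈ Alg x.2 ∧ φ x.1 = 0) ∧ (L.map Prod.snd).IsChain (· ≠ ·)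

theorem isAlternatingCentered_ofFn {n : ℕ} {c : Fin n → A} {idx : Fin n → ι}
    (hmem : ∀ u, c u ∈ Alg (idx u)) (hcent : ∀ u, φ (c u) = 0)
    (halt : ∀ u v : Fin n, (u : ℕ) + 1 = v → idx u ≠ idx v) :
    IsAlternatingCentered φ Alg (List.ofFn fun u => (c u, idx u)) := by
  refine ⟨?_, ?_⟩
  · simp only [List.mem_ofFn, forall_exists_index]
    rintro _ u rfl
    exact ⟨hmem u, hcent u⟩
  · rw [List.map_ofFn, List.isChain_ofFn]
    exact fun m hm => halt _ _ rfl

namespace IsAlternatingCentered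

theorem reverse {L : List (A × ι)} (hL : IsAlternatingCentered φ Alg L) :
    IsAlternatingCentered φ Alg L.reverse := by
  refine ⟨fun x hx => hL.1 x (List.mem_reverse.mp hx), ?_⟩
  rw [List.map_reverse, List.isChain_reverse]
  exact hL.2.imp fun _ _ h => h.symm

theorem left_of_append {L M : List (A × ι)} (h : IsAlternatingCentered φ Alg (L ++ M)) :
    IsAlternatingCentered φ Alg L :=
  ⟨fun x hx => h.1 x (List.mem_append_left M hx), by
    simpa using (List.map_append (f := Prod.snd) ▸ h.2).left_of_append⟩

theorem tail {x : A × ι} {L : List (A × ι)} (h : IsAlternatingCentered φ Alg (x :: L)) :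
    IsAlternatingCentered φ Alg L :=
  ⟨fun y hy => h.1 y (List.mem_cons_of_mem x hy), h.2.tail⟩

theorem append_cons {L M : List (A × ι)} {p q : A × ι}
    (hL : IsAlternatingCentered φ Alg (L ++ [p])) (hM : IsAlternatingCentered φ Alg (q :: M))
    (hpq : p.2 ≠ q.2) : IsAlternatingCentered φ Alg (L ++ p :: q :: M) := by
  refine ⟨fun x hx => ?_, ?_⟩
  · rcases List.mem_append.mp (show x ∈ (L ++ [p]) ++ q :: M by simpa using hx) with hx | hx
    exacts [hL.1 x hx, hM.1 x hx]
  · simpa using hL.2.append hM.2 (by simpa using hpq)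

theorem merge {L M : List (A × ι)} {p q : A × ι}
    (hL : IsAlternatingCentered φ Alg (L ++ [p])) (hM : IsAlternatingCentered φ Alg (q :: M))
    (hpq : p.2 = q.2) {x : A} (hx : x ∈ Alg p.2) (hφx : φ x = 0) :
    IsAlternatingCentered φ Alg (L ++ (x, p.2) :: M) := by
  refine ⟨fun y hy => ?_, ?_⟩
  · rcases List.mem_append.mp hy with hy | hy
    · exact hL.1 y (List.mem_append_left _ hy)
    rcases List.mem_cons.mp hy with rfl | hy
    exacts [⟨hx, hφx⟩, hM.1 y (List.mem_cons_of_mem q hy)]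
  · have hL' : (L.map Prod.snd ++ [p.2]).IsChain (· ≠ ·) := by simpa using hL.2
    have hM' : ([p.2] ++ M.map Prod.snd).IsChain (· ≠ ·) := by simpa [hpq] using hM.2
    simpa using hL'.append_overlap hM' (List.cons_ne_nil _ _)

end IsAlternatingCentered

theorem partCum_eq_zero_of_alternating (hκ : MomentCumulant φ κ)
    (hfree : FreeIndepCumulant (fun i => (Alg i : Set A)) κ) {n : ℕ} (hn : 0 < n)
    {π : Finpartition (univ : Finset (Fin n))} (hnc : IsNonCrossing π)
    {c : Fin n → A} {idx : Fin n → ι} (hmem : ∀ u, c u ∈ Alg (idx u))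
    (hcent : ∀ u, φ (c u) = 0) (halt : ∀ u v : Fin n, (u : ℕ) + 1 = v → idx u ≠ idx v) :
    partCum κ π c = 0 := by
  by_cases hsingleton : ∃ V ∈ π.parts, #V = 1
  · obtain ⟨V, hV, hV1⟩ := hsingleton
    obtain ⟨p, rfl⟩ := card_eq_one.mp hV1
    refine prod_eq_zero hV ?_
    rw [cumulant_sort_singleton, hκ.cumulant_one, hcent]
  push Not at hsingleton
  have h2 : ∀ V ∈ π.parts, 2 ≤ #V := fun V hV => by
    have := (π.nonempty_of_mem_parts hV).card_pos
    have := hsingleton V hV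
    omega
  obtain ⟨V, hV, p, hp, q, hq, hpq⟩ := hnc.exists_adjacent hn h2
  refine prod_eq_zero hV (hfree _ (by simpa using h2 V hV) _
    (fun j => idx ((V.sort (· ≤ ·)).get j)) (fun j => hmem _) ?_)
  obtain ⟨jp, hjp⟩ := List.get_of_mem ((mem_sort (· ≤ ·)).mpr hp)
  obtain ⟨jq, hjq⟩ := List.get_of_mem ((mem_sort (· ≤ ·)).mpr hq)
  exact ⟨jp, jq, by rw [hjp, hjq]; exact halt p q hpq⟩

namespace IsAlternatingCentered

theorem apply_prod_eq_zero (hκ : MomentCumulant φ κ)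
    (hfree : FreeIndepCumulant (fun i => (Alg i : Set A)) κ) {L : List (A × ι)}
    (hL : IsAlternatingCentered φ Alg L) (hne : L ≠ []) :
    φ (L.map Prod.fst).prod = 0 := by
  classical
  rw [← List.ofFn_getElem_eq_map, hκ _ (List.length_pos_iff.mpr hne)]
  refine sum_eq_zero fun π hπ => partCum_eq_zero_of_alternating hκ hfree
    (List.length_pos_iff.mpr hne) (mem_filter.mp hπ).2 (idx := fun u => L[u].2)
    (fun u => (hL.1 _ (L.getElem_mem _)).1) (fun u => (hL.1 _ (L.getElem_mem _)).2) ?_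
  rintro u ⟨v, hv⟩ rfl
  have := List.isChain_iff_getElem.mp hL.2 u (by simpa using hv)
  simpa using this

theorem apply_prod_mul_prod_eq_zero (hφ1 : φ 1 = 1) (hκ : MomentCumulant φ κ)
    (hfree : FreeIndepCumulant (fun i => (Alg i : Set A)) κ) {P Q : List (A × ι)}
    (hP : IsAlternatingCentered φ Alg P) (hQ : IsAlternatingCentered φ Alg Q)
    (hshape : P.map Prod.snd ≠ (Q.map Prod.snd).reverse) :
    φ ((P.map Prod.fst).prod * (Q.map Prod.fst).prod) = 0 := by
  induction P using List.reverseRecOn generalizing Q with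
  | nil =>
    have hQne : Q ≠ [] := by rintro rfl; exact hshape rfl
    simpa using hQ.apply_prod_eq_zero hκ hfree hQne
  | append_singleton P p ih =>
    rcases Q with _ | ⟨q, Q⟩
    · simpa using hP.apply_prod_eq_zero hκ hfree (by simp)
    by_cases hpq : p.2 = q.2
    · set x := p.1 * q.1
      have hx : x ∈ Alg p.2 := mul_mem (hP.1 p (by simp)).1 (hpq ▸ (hQ.1 q (by simp)).1)
      have hsplit : ((P ++ [p]).map Prod.fst).prod * ((q :: Q).map Prod.fst).prod =
          ((P ++ (x - φ x • 1, p.2) :: Q).map Prod.fst).prod +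
            φ x • ((P.map Prod.fst).prod * (Q.map Prod.fst).prod) := by
        simp only [List.map_append, List.map_cons, List.map_nil, List.prod_append,
          List.prod_cons, List.prod_nil, mul_one, sub_mul, mul_sub, smul_mul_assoc, one_mul,
          mul_smul_comm, x, mul_assoc]
        abel
      have hmerge := hP.merge hQ hpq (sub_mem hx (Subalgebra.smul_mem _ (one_mem _) (φ x)))
        (by simp [hφ1])
      rw [hsplit, map_add, map_smul, hmerge.apply_prod_eq_zero hκ hfree (by simp),
        ih hP.left_of_append hQ.tail (fun h => hshape (by simp [h, hpq])), smul_zero, add_zero]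
    · simpa [mul_assoc] using (hP.append_cons hQ hpq).apply_prod_eq_zero hκ hfree (by simp)

end IsAlternatingCentered

end AlternatingWords

theorem kappa_two_star_word_ne_shape_eq_zero_general
    {A : Type*} [Ring A] [Algebra ℂ A] [StarRing A] [StarModule ℂ A] {ι : Type*}
    (φ : A →ₗ[ℂ] ℂ) (hφ1 : φ 1 = 1)
    (hpos : ∀ x : A, 0 ≤ φ (star x * x))
    (κ : ∀ n, MultilinearMap ℂ (fun _ : Fin n => A) ℂ)
    (hκ : MomentCumulant φ κ)
    (Alg : ι → StarSubalgebra ℂ A)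
    (hfree : FreeIndepCumulant (fun i' => (Alg i' : Set A)) κ)
    (k l : ℕ)
    (a : Fin k → A) (i : Fin k → ι) (b : Fin l → A) (j : Fin l → ι)
    (hamem : ∀ u, a u ∈ Alg (i u)) (hacent : ∀ u, φ (a u) = 0)
    (haalt : ∀ u u' : Fin k, (u : ℕ) + 1 = (u' : ℕ) → i u ≠ i u')
    (hbmem : ∀ v, b v ∈ Alg (j v)) (hbcent : ∀ v, φ (b v) = 0)
    (hbalt : ∀ v v' : Fin l, (v : ℕ) + 1 = (v' : ℕ) → j v ≠ j v')
    (hne : ¬ ∃ h : k = l, ∀ u : Fin k, i u = j (Fin.cast h u)) :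
    κ 2 ![star (List.ofFn a).prod, (List.ofFn b).prod] = 0 := by
  rw [hκ.cumulant_two]
  obtain rfl | hl := l.eq_zero_or_pos
  · simp [hφ1]
  let Alg' := fun i => (Alg i).toSubalgebra
  have hP : IsAlternatingCentered φ Alg' (List.ofFn fun u => (star (a u), i u)).reverse :=
    (isAlternatingCentered_ofFn (idx := i) (fun u => (star_mem (hamem u) : star (a u) ∈ Alg (i u)))
      (fun u => by rw [map_star_of_nonneg φ hpos, hacent, map_zero]) haalt).reverse
  have hQ : IsAlternatingCentered φ Alg' (List.ofFn fun v => (b v, j v)) :=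
    isAlternatingCentered_ofFn (idx := j) hbmem hbcent hbalt
  have hshape : ((List.ofFn fun u => (star (a u), i u)).reverse.map Prod.snd) ≠
      ((List.ofFn fun v => (b v, j v)).map Prod.snd).reverse := by
    simp only [List.map_reverse, List.map_ofFn, Function.comp_def, ne_eq, List.reverse_inj]
    intro h
    obtain ⟨rfl, hij⟩ := Sigma.mk.inj_iff.mp (List.ofFn_inj'.mp h)
    exact hne ⟨rfl, fun u => congrFun (eq_of_heq hij) u⟩
  have hφb := hQ.apply_prod_eq_zero hκ hfree (by simpa using hl.ne')
  have hφab := hP.apply_prod_mul_prod_eq_zero hφ1 hκ hfree hQ hshape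
  have hstar : star (List.ofFn a).prod = ((List.ofFn a).map star).reverse.prod :=
    unop_map_list_prod (starMulEquiv (R := A)) _
  simp only [List.map_reverse, List.map_ofFn, Function.comp_def] at hφb hφab
  rw [hstar, List.map_ofFn, Function.comp_def, hφab, hφb, mul_zero, sub_zero]

/-- **Vanishing of `κ_2(a*, b)` for words of different shapes (Lemma 2, first part).**
Let `(A, φ)` be a `*`-probability space with free cumulants `κ`, and let `(Alg i)` be
unital `*`-subalgebras that are freely independent in the cumulant sense. Let
`a = a_1 ⋯ a_k` and `b = b_1 ⋯ b_l` be alternating words of centered elements,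
`a_u ∈ Alg (i u)`, `b_v ∈ Alg (j v)`. If it is not the case that `k = l` and
`i u = j u` for all `u`, then `κ_2(a*, b) = 0`. -/
theorem kappa_two_star_word_ne_shape_eq_zero
    {A : Type*} [Ring A] [Algebra ℂ A] [StarRing A] [StarModule ℂ A] {ι : Type*}
    (φ : A →ₗ[ℂ] ℂ) (hφ1 : φ 1 = 1)
    (hpos : ∀ x : A, 0 ≤ φ (star x * x))
    (κ : ∀ n, MultilinearMap ℂ (fun _ : Fin n => A) ℂ)
    (hκ : MomentCumulant φ κ)
    (Alg : ι → StarSubalgebra ℂ A)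
    (hfree : FreeIndepCumulant (fun i' => (Alg i' : Set A)) κ)
    (k l : ℕ) (hk : 0 < k) (hl : 0 < l)
    (a : Fin k → A) (i : Fin k → ι) (b : Fin l → A) (j : Fin l → ι)
    (hamem : ∀ u, a u ∈ Alg (i u)) (hacent : ∀ u, φ (a u) = 0)
    (haalt : ∀ u u' : Fin k, (u : ℕ) + 1 = (u' : ℕ) → i u ≠ i u')
    (hbmem : ∀ v, b v ∈ Alg (j v)) (hbcent : ∀ v, φ (b v) = 0)
    (hbalt : ∀ v v' : Fin l, (v : ℕ) + 1 = (v' : ℕ) → j v ≠ j v')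
    (hne : ¬ ∃ h : k = l, ∀ u : Fin k, i u = j (Fin.cast h u)) :
    κ 2 ![star (List.ofFn a).prod, (List.ofFn b).prod] = 0 :=
  kappa_two_star_word_ne_shape_eq_zero_general φ hφ1 hpos κ hκ Alg hfree k l a i b j hamem hacent
    haalt hbmem hbcent hbalt hne
end

section
/- Let (A, φ) be a *-probability space, let k, r ≥ 1, and let a_{s,u} ∈ A for 1 ≤ s ≤ r and 1 ≤ u ≤ k. Then the r × r complex matrix M with entries M_{st} = ∏_{u=1}^{k} ( φ(a_{s,u}* a_{t,u}) − φ(a_{s,u}*) φ(a_{t,u}) ) is positive semidefinite, i.e. for every x ∈ ℂ^r, Σ_{s,t} conj(x_s) x_t M_{st} is a nonnegative real number. -/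
open scoped BigOperators ComplexOrder

/-!
Centering each `a_{s,u}` to `b_{s,u} = a_{s,u} - φ(a_{s,u}) 1` turns the `u`-th factor of `M_{st}`
into `φ(b_{s,u}* b_{t,u})`. Positivity of `φ` makes this a positive semidefinite Gram matrix,
and `M` is the Hadamard product of these `k` matrices, so the Schur product theorem finishes
the proof.
-/

open Matrix

namespace Matrix

theorem posSemidef_of_prod_hadamard {𝕜 ι κ : Type*} [RCLike 𝕜] [Finite ι]
    (M : κ → Matrix ι ι 𝕜) (S : Finset κ) (hM : ∀ u ∈ S, (M u).PosSemidef) :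
    (of fun i j => ∏ u ∈ S, M u i j).PosSemidef := by
  classical
  induction S using Finset.induction_on with
  | empty =>
    convert posSemidef_vecMulVec_self_star (1 : ι → 𝕜)
    ext; simp [vecMulVec]
  | insert u S hu ih =>
    rw [Finset.forall_mem_insert] at hM
    convert hM.1.hadamard (ih hM.2) using 1
    ext i j; simp [Finset.prod_insert hu]

theorem PosSemidef.sum_sum_star_mul_mul_nonneg {𝕜 ι : Type*} [RCLike 𝕜] [Fintype ι]
    {M : Matrix ι ι 𝕜} (hM : M.PosSemidef) (x : ι → 𝕜) :
    0 ≤ ∑ s, ∑ t, star (x s) * x t * M s t := by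
  convert hM.dotProduct_mulVec_nonneg x using 1
  simp only [dotProduct, mulVec, Pi.star_apply, Finset.mul_sum]
  exact Finset.sum_congr rfl fun s _ => Finset.sum_congr rfl fun t _ => by ring

end Matrix

section PositiveFunctional

variable {A : Type*} [Ring A] [Algebra ℂ A] [StarRing A] [StarModule ℂ A] {φ : A →ₗ[ℂ] ℂ}

theorem map_star_mul_comm_of_nonneg (hpos : ∀ x : A, 0 ≤ φ (star x * x)) (p q : A) :
    φ (star q * p) = star (φ (star p * q)) := by
  have him : ∀ c : A, (φ (star c * c)).im = 0 := fun c =>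
    (Complex.nonneg_iff.mp (hpos c)).2.symm
  -- polarization: the imaginary parts at `p + q` and `p + I q` give the real and imaginary parts
  have h1 := him (p + q)
  have h2 := him (p + Complex.I • q)
  simp only [star_add, star_smul, add_mul, mul_add, map_add, map_smul, smul_mul_assoc,
    mul_smul_comm, Complex.add_im, Complex.star_def, Complex.conj_I, smul_eq_mul,
    Complex.mul_im, Complex.mul_re, Complex.neg_re, Complex.neg_im, Complex.I_re,
    Complex.I_im, him p, him q] at h1 h2
  apply Complex.ext <;> simp <;> linarith

theorem star_dotProduct_mulVec_eq_map_star_sum_mul_sum {ι : Type*} [Fintype ι] (b : ι → A) (x : ι → ℂ) :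
    star x ⬝ᵥ (of fun s t => φ (star (b s) * b t)) *ᵥ x
      = φ (star (∑ s, x s • b s) * ∑ t, x t • b t) := by
  simp only [star_sum, star_smul, Finset.sum_mul, Finset.mul_sum, smul_mul_smul_comm, map_sum,
    map_smul, dotProduct, mulVec, of_apply, Pi.star_apply, smul_eq_mul]
  rw [Finset.sum_comm]
  exact Finset.sum_congr rfl fun s _ => Finset.sum_congr rfl fun t _ => by ring

theorem posSemidef_gram_of_nonneg (hpos : ∀ x : A, 0 ≤ φ (star x * x))
    {ι : Type*} [Fintype ι] (b : ι → A) :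
    (of fun s t => φ (star (b s) * b t)).PosSemidef := by
  refine .of_dotProduct_mulVec_nonneg ?_ fun x => ?_
  · ext s t
    exact (map_star_mul_comm_of_nonneg hpos _ _).symm
  · rw [star_dotProduct_mulVec_eq_map_star_sum_mul_sum]
    exact hpos _

theorem map_star_sub_mul_sub (hφ1 : φ 1 = 1) (p q : A) :
    φ (star (p - φ p • 1) * (q - φ q • 1)) = φ (star p * q) - φ (star p) * φ q := by
  simp only [star_sub, star_smul, star_one, sub_mul, mul_sub, one_mul, mul_one, smul_mul_assoc,
    mul_smul_comm, map_sub, map_smul, hφ1, smul_eq_mul, Complex.star_def]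
  ring

theorem posSemidef_covariance (hφ1 : φ 1 = 1) (hpos : ∀ x : A, 0 ≤ φ (star x * x))
    {ι : Type*} [Fintype ι] (a : ι → A) :
    (of fun s t => φ (star (a s) * a t) - φ (star (a s)) * φ (a t)).PosSemidef := by
  simpa only [map_star_sub_mul_sub hφ1] using
    posSemidef_gram_of_nonneg hpos fun s => a s - φ (a s) • 1

end PositiveFunctional

theorem hadamard_covariance_matrix_posSemidef_general
    {A : Type*} [Ring A] [Algebra ℂ A] [StarRing A] [StarModule ℂ A]
    (φ : A →ₗ[ℂ] ℂ) (hφ1 : φ 1 = 1)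
    (hpos : ∀ x : A, 0 ≤ φ (star x * x))
    (k r : ℕ)
    (a : Fin r → Fin k → A) (x : Fin r → ℂ) :
    0 ≤ ∑ s : Fin r, ∑ t : Fin r,
        (starRingEnd ℂ) (x s) * x t *
          ∏ u : Fin k,
            (φ (star (a s u) * a t u) - φ (star (a s u)) * φ (a t u)) :=
  (posSemidef_of_prod_hadamard _ Finset.univ fun u _ =>
    posSemidef_covariance hφ1 hpos fun s => a s u).sum_sum_star_mul_mul_nonneg x

/-- **Schur–Hadamard products of covariance matrices are positive semidefinite.**
Let `(A, φ)` be a `*`-probability space, `k, r ≥ 1`, and `a_{s,u} ∈ A` for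
`1 ≤ s ≤ r`, `1 ≤ u ≤ k`. Then the matrix
`M_{st} = ∏_{u=1}^k (φ(a_{s,u}* a_{t,u}) − φ(a_{s,u}*) φ(a_{t,u}))` is positive
semidefinite: for every `x ∈ ℂ^r`, `Σ_{s,t} conj(x_s) x_t M_{st}` is a nonnegative
real number. -/
theorem hadamard_covariance_matrix_posSemidef
    {A : Type*} [Ring A] [Algebra ℂ A] [StarRing A] [StarModule ℂ A]
    (φ : A →ₗ[ℂ] ℂ) (hφ1 : φ 1 = 1)
    (hpos : ∀ x : A, 0 ≤ φ (star x * x))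
    (k r : ℕ) (hk : 0 < k) (hr : 0 < r)
    (a : Fin r → Fin k → A) (x : Fin r → ℂ) :
    0 ≤ ∑ s : Fin r, ∑ t : Fin r,
        (starRingEnd ℂ) (x s) * x t *
          ∏ u : Fin k,
            (φ (star (a s u) * a t u) - φ (star (a s u)) * φ (a t u)) :=
  hadamard_covariance_matrix_posSemidef_general φ hφ1 hpos k r a x
end

section
/- Let (A, φ) be a non-commutative probability space. Then there exists a unique family of multilinear functionals κ_n : A^n → ℂ, n ≥ 1, such that for all n ≥ 1 and all a_1, …, a_n ∈ A, φ(a_1 ⋯ a_n) = Σ_{π ∈ NC(n)} κ_π[a_1, …, a_n], where κ_π denotes the multiplicative extension of the family (κ_n). -/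
open scoped BigOperators ComplexOrder

/-!
Removing the one-block partition `⊤` from `NC(n)` leaves only partitions whose blocks have
fewer than `n` elements, so the moment–cumulant relation in arity `n` reads
`φ(a_1 ⋯ a_n) = κ_n(a_1, …, a_n) + (terms involving only κ_m, m < n)`.
Read as a recursion this defines `κ_n` (existence), and it shows by strong induction that
any two solutions agree (uniqueness). Each `κ_π` is multilinear, because the variable `a_i`
enters only through the factor of the block containing `i`; hence so is the recursively
defined `κ_n`.
-/

namespace Finpartition

variable {n : ℕ}

lemma parts_top_of_pos (hn : 0 < n) :
    (⊤ : Finpartition (Finset.univ : Finset (Fin n))).parts = {Finset.univ} := by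
  have : Nonempty (Fin n) := ⟨⟨0, hn⟩⟩
  refine (Finset.subset_singleton_iff.mp (parts_top_subset _)).resolve_left ?_
  exact (parts_nonempty _ Finset.univ_nonempty.ne_empty).ne_empty

lemma eq_top_of_univ_mem_parts {π : Finpartition (Finset.univ : Finset (Fin n))}
    (h : Finset.univ ∈ π.parts) : π = ⊤ :=
  le_top.antisymm fun _ hb =>
    ⟨Finset.univ, h, (Finset.mem_singleton.mp (parts_top_subset _ hb)).le⟩

lemma card_lt_of_ne_top {π : Finpartition (Finset.univ : Finset (Fin n))} (hπ : π ≠ ⊤)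
    {V : Finset (Fin n)} (hV : V ∈ π.parts) : V.card < n := by
  refine (Finset.card_le_univ V).trans_eq (Fintype.card_fin n) |>.lt_of_ne fun h => hπ ?_
  exact eq_top_of_univ_mem_parts (Finset.eq_univ_of_card V (by simpa using h) ▸ hV)

end Finpartition

lemma isNonCrossing_top {n : ℕ} :
    IsNonCrossing (⊤ : Finpartition (Finset.univ : Finset (Fin n))) :=
  fun _ _ _ _ _ _ _ _ hB _ hC _ _ _ _ => Finpartition.parts_top_subsingleton _ hB hC

section partCum

variable {A : Type*} [Ring A] [Algebra ℂ A] {n : ℕ}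

lemma partCum_congr {κ₁ κ₂ : ∀ m, MultilinearMap ℂ (fun _ : Fin m => A) ℂ}
    {π : Finpartition (Finset.univ : Finset (Fin n))}
    (h : ∀ V ∈ π.parts, κ₁ V.card = κ₂ V.card) (a : Fin n → A) :
    partCum κ₁ π a = partCum κ₂ π a := by
  refine Finset.prod_congr rfl fun V hV => ?_
  have h' := h V hV
  rw [← Finset.length_sort (· ≤ ·)] at h'
  rw [h']

lemma partCum_top (hn : 0 < n) (κ : ∀ m, MultilinearMap ℂ (fun _ : Fin m => A) ℂ)
    (a : Fin n → A) : partCum κ ⊤ a = κ n a := by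
  have cast_arity : ∀ {m} (h : m = n), κ m (fun j => a (Fin.cast h j)) = κ n a := by
    rintro _ rfl; rfl
  rw [partCum, Finpartition.parts_top_of_pos hn, Finset.prod_singleton, Fin.sort_univ]
  simp only [List.get_finRange]
  exact cast_arity _

lemma exists_partCum_update_eq_mul
    (κ : ∀ m, MultilinearMap ℂ (fun _ : Fin m => A) ℂ)
    (π : Finpartition (Finset.univ : Finset (Fin n))) (a : Fin n → A) (i : Fin n) :
    ∃ (c : ℂ) (m : ℕ) (b : Fin m → A) (k : Fin m),
      ∀ y : A, partCum κ π (Function.update a i y) = κ m (Function.update b k y) * c := by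
  obtain ⟨V₀, hV₀, hi⟩ := π.exists_mem (Finset.mem_univ i)
  set L := V₀.sort (· ≤ ·)
  obtain ⟨k, hk⟩ := List.get_of_mem ((Finset.mem_sort _).mpr hi : i ∈ L)
  refine ⟨∏ V ∈ π.parts.erase V₀,
      κ (V.sort (· ≤ ·)).length (fun j => a ((V.sort (· ≤ ·)).get j)),
    L.length, fun j => a (L.get j), k, fun y => ?_⟩
  rw [partCum, ← Finset.mul_prod_erase _ _ hV₀]
  congr 1
  · congr 1
    funext j
    rcases eq_or_ne j k with rfl | hjk
    · rw [hk, Function.update_self, Function.update_self]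
    · have hne : L.get j ≠ i := hk ▸ fun h => hjk ((V₀.sort_nodup _).get_inj_iff.mp h)
      rw [Function.update_of_ne hne, Function.update_of_ne hjk]
  · refine Finset.prod_congr rfl fun V hV => ?_
    obtain ⟨hVV₀, hVπ⟩ := Finset.mem_erase.mp hV
    congr 1
    funext j
    have hmem : (V.sort (· ≤ ·)).get j ∈ V := (Finset.mem_sort _).mp (List.get_mem _ _)
    have hne : (V.sort (· ≤ ·)).get j ≠ i := fun h =>
      hVV₀ (π.eq_of_mem_parts hVπ hV₀ (h ▸ hmem) hi)
    rw [Function.update_of_ne hne]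

noncomputable def partCumMultilinear (κ : ∀ m, MultilinearMap ℂ (fun _ : Fin m => A) ℂ)
    (π : Finpartition (Finset.univ : Finset (Fin n))) :
    MultilinearMap ℂ (fun _ : Fin n => A) ℂ where
  toFun := partCum κ π
  map_update_add' := by
    intro inst a i x y
    obtain rfl : inst = instDecidableEqFin n := Subsingleton.elim _ _
    obtain ⟨c, m, b, k, hc⟩ := exists_partCum_update_eq_mul κ π a i
    rw [hc, hc, hc, (κ m).map_update_add, add_mul]
  map_update_smul' := by
    intro inst a i r x
    obtain rfl : inst = instDecidableEqFin n := Subsingleton.elim _ _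
    obtain ⟨c, m, b, k, hc⟩ := exists_partCum_update_eq_mul κ π a i
    rw [hc, hc, (κ m).map_update_smul, smul_mul_assoc]

@[simp] lemma partCumMultilinear_apply (κ : ∀ m, MultilinearMap ℂ (fun _ : Fin m => A) ℂ)
    (π : Finpartition (Finset.univ : Finset (Fin n))) (a : Fin n → A) :
    partCumMultilinear κ π a = partCum κ π a := rfl

open Classical in
lemma sum_isNonCrossing_partCum (hn : 0 < n)
    (κ : ∀ m, MultilinearMap ℂ (fun _ : Fin m => A) ℂ) (a : Fin n → A) :
    ∑ π ∈ Finset.univ.filter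
        (fun π : Finpartition (Finset.univ : Finset (Fin n)) => IsNonCrossing π),
        partCum κ π a =
      κ n a + ∑ π ∈ (Finset.univ.filter IsNonCrossing).erase ⊤, partCum κ π a := by
  have top_mem : ⊤ ∈ Finset.univ.filter
      (fun π : Finpartition (Finset.univ : Finset (Fin n)) => IsNonCrossing π) :=
    Finset.mem_filter.mpr ⟨Finset.mem_univ _, isNonCrossing_top⟩
  rw [← Finset.add_sum_erase _ _ top_mem, partCum_top hn]

end partCum

section freeCum

variable {A : Type*} [Ring A] [Algebra ℂ A]

open Classical in
/-- The truncation `if m < n` only serves termination: it never applies, since blocks of a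
partition `π ≠ ⊤` have fewer than `n` elements. -/
noncomputable def freeCum (φ : A →ₗ[ℂ] ℂ) (n : ℕ) :
    MultilinearMap ℂ (fun _ : Fin n => A) ℂ :=
  φ.compMultilinearMap (MultilinearMap.mkPiAlgebraFin ℂ n A) -
    ∑ π ∈ (Finset.univ.filter IsNonCrossing).erase ⊤,
      partCumMultilinear (fun m => if m < n then freeCum φ m else 0) π
termination_by n
decreasing_by assumption

open Classical in
lemma freeCum_apply (φ : A →ₗ[ℂ] ℂ) {n : ℕ} (a : Fin n → A) :
    freeCum φ n a = φ (List.ofFn a).prod -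
      ∑ π ∈ (Finset.univ.filter IsNonCrossing).erase ⊤, partCum (freeCum φ) π a := by
  rw [freeCum, sub_apply, sum_apply, LinearMap.compMultilinearMap_apply,
    MultilinearMap.mkPiAlgebraFin_apply]
  congr 1
  refine Finset.sum_congr rfl fun π hπ => (partCumMultilinear_apply _ π a).trans <|
    partCum_congr (fun V hV => ?_) a
  rw [if_pos (Finpartition.card_lt_of_ne_top (Finset.ne_of_mem_erase hπ) hV)]

lemma momentCumulant_freeCum (φ : A →ₗ[ℂ] ℂ) : MomentCumulant φ (freeCum φ) := by
  intro n hn a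
  rw [sum_isNonCrossing_partCum hn, freeCum_apply, sub_add_cancel]

end freeCum

open Classical in
lemma MomentCumulant.unique {A : Type*} [Ring A] [Algebra ℂ A] {φ : A →ₗ[ℂ] ℂ}
    {κ₁ κ₂ : ∀ n, MultilinearMap ℂ (fun _ : Fin n => A) ℂ}
    (h₁ : MomentCumulant φ κ₁) (h₂ : MomentCumulant φ κ₂) :
    ∀ n, 0 < n → κ₁ n = κ₂ n := by
  intro n
  induction n using Nat.strong_induction_on with
  | _ n ih =>
    intro hn
    ext a
    have lower_terms_eq :
        ∑ π ∈ (Finset.univ.filter IsNonCrossing).erase ⊤, partCum κ₁ π a =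
          ∑ π ∈ (Finset.univ.filter IsNonCrossing).erase ⊤, partCum κ₂ π a :=
      Finset.sum_congr rfl fun π hπ => partCum_congr (fun V hV =>
        ih _ (Finpartition.card_lt_of_ne_top (Finset.ne_of_mem_erase hπ) hV)
          (π.nonempty_of_mem_parts hV).card_pos) a
    have moments_eq := (h₁ n hn a).symm.trans (h₂ n hn a)
    rw [sum_isNonCrossing_partCum hn, sum_isNonCrossing_partCum hn, lower_terms_eq] at moments_eq
    exact add_right_cancel moments_eq

theorem exists_unique_free_cumulants_general
    {A : Type*} [Ring A] [Algebra ℂ A]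
    (φ : A →ₗ[ℂ] ℂ) :
    ∃ κ : ∀ n, MultilinearMap ℂ (fun _ : Fin n => A) ℂ,
      MomentCumulant φ κ ∧
      ∀ κ' : ∀ n, MultilinearMap ℂ (fun _ : Fin n => A) ℂ,
        MomentCumulant φ κ' → ∀ n, 0 < n → κ' n = κ n :=
  ⟨freeCum φ, momentCumulant_freeCum φ, fun _ h => h.unique (momentCumulant_freeCum φ)⟩

/-- **Existence and uniqueness of free cumulants.**
Let `(A, φ)` be a non-commutative probability space. There exists a family of
multilinear functionals `κ n : A^n → ℂ` satisfying the moment–cumulant relation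
`φ(a_1 ⋯ a_n) = Σ_{π ∈ NC(n)} κ_π[a_1, …, a_n]` for all `n ≥ 1`, and it is unique:
any other such family agrees with it in every arity `n ≥ 1`. -/
theorem exists_unique_free_cumulants
    {A : Type*} [Ring A] [Algebra ℂ A]
    (φ : A →ₗ[ℂ] ℂ) (hφ1 : φ 1 = 1) :
    ∃ κ : ∀ n, MultilinearMap ℂ (fun _ : Fin n => A) ℂ,
      MomentCumulant φ κ ∧
      ∀ κ' : ∀ n, MultilinearMap ℂ (fun _ : Fin n => A) ℂ,
        MomentCumulant φ κ' → ∀ n, 0 < n → κ' n = κ n :=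
  exists_unique_free_cumulants_general φ
end
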